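/- Let f : ℕ → ℝ, let g(x) = sup { ∑_{n ∈ M} 2^{-n} : M ⊆ ℕ finite, ∀ n ∈ M, f(n) < x }, let A = { x ∈ ℝ : x ≤ g(x) }, and let x₀ = sup A. Then for every n₀ ∈ ℕ, f(n₀) ≠ x₀. -/
import Mathlib


noncomputable def g (f : ℕ → ℝ) (x : ℝ) : ℝ :=
  sSup {s : ℝ | ∃ M : Finset ℕ, (∀ n ∈ M, f n < x) ∧ s = ∑ n ∈ M, (2:ℝ) ^ (-(n:ℤ))}

lemma sum_bound (M : Finset ℕ) : ∑ n ∈ M, (2:ℝ) ^ (-(n:ℤ)) ≤ 2 := by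
  have h : ∀ n : ℕ, (2:ℝ) ^ (-(n:ℤ)) = (1/2:ℝ)^n := by
    intro n; rw [zpow_neg, zpow_natCast, one_div, inv_pow]
  calc ∑ n ∈ M, (2:ℝ) ^ (-(n:ℤ)) = ∑ n ∈ M, (1/2:ℝ)^n := by simp [h]
    _ ≤ ∑' n, (1/2:ℝ)^n := Summable.sum_le_tsum M (fun n _ => by positivity)
        (summable_geometric_of_lt_one (by norm_num) (by norm_num))
    _ = 2 := by rw [tsum_geometric_of_lt_one (by norm_num) (by norm_num)]; norm_num

lemma gset_nonempty (f : ℕ → ℝ) (x : ℝ) :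
    Set.Nonempty {s : ℝ | ∃ M : Finset ℕ, (∀ n ∈ M, f n < x) ∧ s = ∑ n ∈ M, (2:ℝ) ^ (-(n:ℤ))} :=
  ⟨0, ∅, by simp, by simp⟩

lemma gset_bdd (f : ℕ → ℝ) (x : ℝ) :
    BddAbove {s : ℝ | ∃ M : Finset ℕ, (∀ n ∈ M, f n < x) ∧ s = ∑ n ∈ M, (2:ℝ) ^ (-(n:ℤ))} :=
  ⟨2, by rintro s ⟨M, hM, rfl⟩; exact sum_bound M⟩

lemma g_nonneg (f : ℕ → ℝ) (x : ℝ) : 0 ≤ g f x :=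
  le_csSup (gset_bdd f x) ⟨∅, by simp, by simp⟩

lemma g_le_two (f : ℕ → ℝ) (x : ℝ) : g f x ≤ 2 :=
  csSup_le (gset_nonempty f x) (by rintro s ⟨M, hM, rfl⟩; exact sum_bound M)

theorem stmt6 (f : ℕ → ℝ) : ∀ n₀ : ℕ, f n₀ ≠ sSup {x : ℝ | x ≤ g f x} := by
  intro n₀ h
  set A : Set ℝ := {x : ℝ | x ≤ g f x} with hA
  have hAne : A.Nonempty := ⟨0, g_nonneg f 0⟩
  have hAbdd : BddAbove A := ⟨2, fun x hx => le_trans hx (g_le_two f x)⟩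
  set x₀ := sSup A with hx₀
  set c : ℝ := (2:ℝ) ^ (-(n₀:ℤ)) with hc
  have hcpos : 0 < c := by positivity
  have key : ∀ x ∈ A, x ≤ x₀ - c := by
    intro x hxA
    by_contra hcon
    push_neg at hcon
    have hxle : x ≤ x₀ := le_csSup hAbdd hxA
    have hygt : x₀ < x + c := by linarith
    -- g f x ≤ g f (x + c) - c
    have hstep : g f x ≤ g f (x + c) - c := by
      apply csSup_le (gset_nonempty f x)
      rintro s ⟨M, hM, rfl⟩
      have hn₀ : n₀ ∉ M := fun hmem => absurd (hM n₀ hmem) (by rw [h]; exact not_lt.mpr hxle)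
      have hmem : (∑ n ∈ insert n₀ M, (2:ℝ) ^ (-(n:ℤ))) ∈
          {s : ℝ | ∃ M : Finset ℕ, (∀ n ∈ M, f n < x + c) ∧ s = ∑ n ∈ M, (2:ℝ) ^ (-(n:ℤ))} := by
        refine ⟨insert n₀ M, ?_, rfl⟩
        intro n hn
        rcases Finset.mem_insert.mp hn with rfl | hn
        · rw [h]; linarith
        · exact lt_of_lt_of_le (hM n hn) (by linarith)
      have hle : c + ∑ n ∈ M, (2:ℝ) ^ (-(n:ℤ)) ≤ g f (x + c) := by
        rw [hc]
        have := le_csSup (gset_bdd f (x + c)) hmem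
        rwa [Finset.sum_insert hn₀] at this
      linarith
    have hyA : x + c ∈ A := by
      have hxg : x ≤ g f x := hxA
      show x + c ≤ g f (x + c)
      linarith
    have := le_csSup hAbdd hyA
    linarith
  have : x₀ ≤ x₀ - c := csSup_le hAne key
  linarith
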